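/- Let S = ((X,d), (f_i)_{i∈{1,…,n}}) be an iterated function system with n ≥ 2, where each f_i satisfies d(f_i(x), f_i(y)) ≤ c_i·d(x,y) for all x,y ∈ X with c_i ∈ [0,1). Let γ_i be the unique fixed point of f_i, M = max_{i,j} d(γ_i, γ_j), let i' realize max{c_1,…,c_n} and i'' ∈ {1,…,n}\{i'} realize max{c_i : i ≠ i'}. Then the attractor A_S satisfies A_S ⊆ (⋃_{i∈{1,…,n}\{i'}} B[γ_i, M·c_i·(1 + c_{i'})/(1 − c_{i'}·c_{i''})]) ∪ B[γ_{i'}, M·c_{i'}·(1 + c_{i''})/(1 − c_{i'}·c_{i''})]. -/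

import Mathlib

/-!
Let `a` be a point of the attractor `A` farthest from a closed nonempty set `B` that every `f_i`
maps into itself. Writing `a = f_i b` with `b ∈ A`, the contraction gives
`infDist a B ≤ c_{i'} · infDist b B ≤ c_{i'} · infDist a B`, so `infDist a B = 0` and `A ⊆ B`.
The union of the balls `B[γ_i, r_i]` is such a set as soon as
`c_i (r_j + d(γ_j, γ_i)) ≤ r_i` for all `i, j`, and the radii of the statement satisfy this
with `d(γ_j, γ_i) ≤ M`: for `i ≠ j` the inequality even holds with equality once `r_j` is
replaced by its bound `r_{i'}` (for `i ≠ i'`) or `M c_{i''} (1 + c_{i'}) / (1 - c_{i'} c_{i''})`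
(for `i = i'`).
-/

open Set Metric
open scoped NNReal

section Contraction

variable {X : Type*} [PseudoMetricSpace X]

theorem LipschitzWith.infDist_image_le {Y : Type*} [PseudoMetricSpace Y] {f : X → Y} {K : ℝ≥0}
    (hf : LipschitzWith K f) (x : X) (s : Set X) :
    infDist (f x) (f '' s) ≤ K * infDist x s := by
  rcases s.eq_empty_or_nonempty with rfl | hs
  · simp
  have hle : ∀ y ∈ s, infDist (f x) (f '' s) ≤ K * dist x y := fun y hy =>
    (infDist_le_dist_of_mem (mem_image_of_mem f hy)).trans (hf.dist_le_mul x y)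
  rcases K.coe_nonneg.eq_or_lt with hK | hK
  · obtain ⟨y, hy⟩ := hs
    simpa [← hK] using hle y hy
  · rw [← div_le_iff₀' hK, le_infDist hs]
    exact fun y hy => (div_le_iff₀' hK).2 (hle y hy)

theorem IsCompact.subset_of_mapsTo {ι : Type*} {f : ι → X → X} {K : ℝ≥0} (hK : K < 1)
    (hf : ∀ i, LipschitzWith K (f i)) {A B : Set X} (hA : IsCompact A)
    (hAf : A ⊆ ⋃ i, f i '' A) (hB : IsClosed B) (hBne : B.Nonempty)
    (hBf : ∀ i, MapsTo (f i) B B) : A ⊆ B := by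
  rcases A.eq_empty_or_nonempty with rfl | hAne
  · exact empty_subset B
  obtain ⟨a, haA, hmax⟩ := hA.exists_isMaxOn hAne (continuous_infDist_pt B).continuousOn
  have hcontract : infDist a B ≤ K * infDist a B := by
    obtain ⟨i, b, hbA, rfl⟩ : ∃ i, ∃ b ∈ A, f i b = a := by simpa using hAf haA
    calc infDist (f i b) B ≤ infDist (f i b) (f i '' B) :=
          infDist_le_infDist_of_subset (hBf i).image_subset (hBne.image _)
      _ ≤ K * infDist b B := (hf i).infDist_image_le b B
      _ ≤ K * infDist (f i b) B := by gcongr; exact hmax hbA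
  have ha : infDist a B = 0 :=
    le_antisymm (by nlinarith [infDist_nonneg (x := a) (s := B), NNReal.coe_lt_one.2 hK])
      infDist_nonneg
  exact fun x hx => (hB.mem_iff_infDist_zero hBne).2
    (le_antisymm (ha ▸ hmax hx) infDist_nonneg)

theorem mapsTo_iUnion_closedBall {ι : Type*} {f : ι → X → X} {K : ι → ℝ≥0}
    (hf : ∀ i, LipschitzWith (K i) (f i)) {γ : ι → X} (hγ : ∀ i, f i (γ i) = γ i)
    {r : ι → ℝ} (hr : ∀ i j, K i * (r j + dist (γ j) (γ i)) ≤ r i) (i : ι) :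
    MapsTo (f i) (⋃ j, closedBall (γ j) (r j)) (⋃ j, closedBall (γ j) (r j)) := by
  refine mapsTo_iUnion.2 fun j => ?_
  have hball := (hf i).mapsTo_closedBall (γ i) (r j + dist (γ j) (γ i))
  rw [hγ i] at hball
  exact hball.mono (closedBall_subset_closedBall' le_rfl) <|
    (closedBall_subset_closedBall (hr i j)).trans
      (subset_iUnion (fun j => closedBall (γ j) (r j)) i)

end Contraction

section CoverRadius

theorem mul_div_one_sub_mul_add (x y z M : ℝ) (h : 1 - y * z ≠ 0) :
    x * (M * y * (1 + z) / (1 - y * z) + M) = M * x * (1 + y) / (1 - y * z) := by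
  field_simp
  ring

theorem one_sub_mul_pos_of_le {a b : ℝ} (hb : 0 ≤ b) (hba : b ≤ a) (ha : a < 1) :
    0 < 1 - a * b := by
  nlinarith

variable {ι : Type*} [DecidableEq ι]

noncomputable def coverRadius (c : ι → ℝ) (M : ℝ) (i' i'' : ι) : ι → ℝ :=
  Function.update (fun i => M * c i * (1 + c i') / (1 - c i' * c i'')) i'
    (M * c i' * (1 + c i'') / (1 - c i' * c i''))

variable {c : ι → ℝ} {M : ℝ} {i' i'' : ι}

theorem coverRadius_self :
    coverRadius c M i' i'' i' = M * c i' * (1 + c i'') / (1 - c i' * c i'') :=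
  Function.update_self ..

theorem coverRadius_of_ne {i : ι} (h : i ≠ i') :
    coverRadius c M i' i'' i = M * c i * (1 + c i') / (1 - c i' * c i'') :=
  Function.update_of_ne h ..

theorem coverRadius_nonneg (hc0 : ∀ i, 0 ≤ c i) (hD : 0 < 1 - c i' * c i'') (hM : 0 ≤ M)
    (i : ι) : 0 ≤ coverRadius c M i' i'' i := by
  rcases eq_or_ne i i' with rfl | hi
  · rw [coverRadius_self]
    exact div_nonneg (mul_nonneg (mul_nonneg hM (hc0 _)) (by linarith [hc0 i''])) hD.le
  · rw [coverRadius_of_ne hi]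
    exact div_nonneg (mul_nonneg (mul_nonneg hM (hc0 _)) (by linarith [hc0 i'])) hD.le

theorem coverRadius_le_of_ne (hc0 : ∀ i, 0 ≤ c i) (hi'' : ∀ i, i ≠ i' → c i ≤ c i'')
    (hD : 0 < 1 - c i' * c i'') (hM : 0 ≤ M) {j : ι} (hj : j ≠ i') :
    coverRadius c M i' i'' j ≤ M * c i'' * (1 + c i') / (1 - c i' * c i'') := by
  rw [coverRadius_of_ne hj]
  have hci' := hc0 i'
  gcongr
  exact hi'' j hj

theorem coverRadius_le_self (hc0 : ∀ i, 0 ≤ c i) (hi' : ∀ i, c i ≤ c i')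
    (hi'' : ∀ i, i ≠ i' → c i ≤ c i'') (hD : 0 < 1 - c i' * c i'') (hM : 0 ≤ M) (j : ι) :
    coverRadius c M i' i'' j ≤ coverRadius c M i' i'' i' := by
  rcases eq_or_ne j i' with rfl | hj
  · exact le_rfl
  refine (coverRadius_le_of_ne hc0 hi'' hD hM hj).trans ?_
  rw [coverRadius_self]
  gcongr ?_ / _
  nlinarith [mul_le_mul_of_nonneg_left (hi' i'') hM]

theorem mul_coverRadius_add_le (hc0 : ∀ i, 0 ≤ c i) (hi' : ∀ i, c i ≤ c i')
    (hi'' : ∀ i, i ≠ i' → c i ≤ c i'') (hD : 0 < 1 - c i' * c i'') (hM : 0 ≤ M) {i j : ι}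
    (hij : i ≠ j) : c i * (coverRadius c M i' i'' j + M) ≤ coverRadius c M i' i'' i := by
  have hci := hc0 i
  rcases eq_or_ne i i' with rfl | hi
  · calc c i * (coverRadius c M i i'' j + M)
          ≤ c i * (M * c i'' * (1 + c i) / (1 - c i * c i'') + M) := by
            gcongr; exact coverRadius_le_of_ne hc0 hi'' hD hM hij.symm
        _ = coverRadius c M i i'' i := by
            rw [coverRadius_self, mul_comm (c i) (c i''),
              mul_div_one_sub_mul_add _ _ _ _ (by rw [mul_comm]; exact hD.ne')]
  · calc c i * (coverRadius c M i' i'' j + M) ≤ c i * (coverRadius c M i' i'' i' + M) := by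
            gcongr; exact coverRadius_le_self hc0 hi' hi'' hD hM j
        _ = coverRadius c M i' i'' i := by
            rw [coverRadius_self, coverRadius_of_ne hi, mul_div_one_sub_mul_add _ _ _ _ hD.ne']

theorem mul_coverRadius_add_dist_le {X : Type*} [PseudoMetricSpace X] (hc0 : ∀ i, 0 ≤ c i)
    (hc1 : ∀ i, c i < 1) (hi' : ∀ i, c i ≤ c i') (hi'' : ∀ i, i ≠ i' → c i ≤ c i'')
    (hD : 0 < 1 - c i' * c i'') {γ : ι → X} (hγ : ∀ i j, dist (γ i) (γ j) ≤ M) (i j : ι) :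
    c i * (coverRadius c M i' i'' j + dist (γ j) (γ i)) ≤ coverRadius c M i' i'' i := by
  have hM : 0 ≤ M := dist_nonneg.trans (hγ i i)
  rcases eq_or_ne i j with rfl | hij
  · rw [dist_self, add_zero]
    exact mul_le_of_le_one_left (coverRadius_nonneg hc0 hD hM i) (hc1 i).le
  · calc c i * (coverRadius c M i' i'' j + dist (γ j) (γ i))
          ≤ c i * (coverRadius c M i' i'' j + M) := by
            have hci := hc0 i
            gcongr
            exact hγ j i
        _ ≤ coverRadius c M i' i'' i := mul_coverRadius_add_le hc0 hi' hi'' hD hM hij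

end CoverRadius

/-- If `S = ((X,d), (f_i)_{i ∈ {1,…,n}})` is an IFS with `n ≥ 2`, each `f_i` satisfying
`d(f_i x, f_i y) ≤ c_i d(x,y)` with `c_i ∈ [0,1)`, `γ_i` the fixed point of `f_i`,
`M = max_{i,j} d(γ_i, γ_j)`, `i'` maximizing `c` and `i'' ≠ i'` maximizing `c` over the
remaining indices, then the attractor `A` (the nonempty compact set with
`A = ⋃ i, f_i(A)`) satisfies
`A ⊆ (⋃_{i ≠ i'} B[γ_i, M c_i (1+c_{i'})/(1−c_{i'}c_{i''})]) ∪
B[γ_{i'}, M c_{i'} (1+c_{i''})/(1−c_{i'}c_{i''})]`. -/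
theorem attractor_subset_explicit_cover
    {X : Type*} [MetricSpace X]
    {n : ℕ} (hn : 2 ≤ n)
    (f : Fin n → X → X) (c : Fin n → ℝ)
    (hc0 : ∀ i, 0 ≤ c i) (hc1 : ∀ i, c i < 1)
    (hlip : ∀ i, ∀ x y : X, dist (f i x) (f i y) ≤ c i * dist x y)
    (γ : Fin n → X) (hγ : ∀ i, f i (γ i) = γ i)
    (M : ℝ)
    (hM : M = Finset.univ.sup'
      ⟨(⟨0, by omega⟩, ⟨0, by omega⟩), Finset.mem_univ _⟩
      (fun p : Fin n × Fin n => dist (γ p.1) (γ p.2)))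
    (i' i'' : Fin n)
    (hi' : ∀ i, c i ≤ c i') (hi'' : ∀ i, i ≠ i' → c i ≤ c i'')
    (A : Set X) (hA : IsCompact A)
    (hself : A = ⋃ i, f i '' A) :
    A ⊆ (⋃ i ∈ ({i : Fin n | i ≠ i'}),
        Metric.closedBall (γ i) (M * c i * (1 + c i') / (1 - c i' * c i''))) ∪
      Metric.closedBall (γ i') (M * c i' * (1 + c i'') / (1 - c i' * c i'')) := by
  have hγM : ∀ i j, dist (γ i) (γ j) ≤ M := fun i j =>
    hM ▸ Finset.le_sup' (fun p : Fin n × Fin n => dist (γ p.1) (γ p.2)) (Finset.mem_univ (i, j))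
  have hM0 : 0 ≤ M := dist_nonneg.trans (hγM i' i')
  have hD : 0 < 1 - c i' * c i'' := one_sub_mul_pos_of_le (hc0 i'') (hi' i'') (hc1 i')
  have hf : ∀ i, LipschitzWith ⟨c i, hc0 i⟩ (f i) := fun i => LipschitzWith.of_dist_le_mul (hlip i)
  have hcover : A ⊆ ⋃ i, closedBall (γ i) (coverRadius c M i' i'' i) :=
    hA.subset_of_mapsTo (K := ⟨c i', hc0 i'⟩) (hc1 i') (fun i => (hf i).weaken (hi' i))
      hself.subset (isClosed_iUnion_of_finite fun _ => isClosed_closedBall)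
      ⟨γ i', mem_iUnion.2 ⟨i', mem_closedBall_self (coverRadius_nonneg hc0 hD hM0 i')⟩⟩
      (mapsTo_iUnion_closedBall hf hγ (mul_coverRadius_add_dist_le hc0 hc1 hi' hi'' hD hγM))
  intro x hx
  obtain ⟨i, hi⟩ := mem_iUnion.1 (hcover hx)
  rcases eq_or_ne i i' with rfl | hne
  · exact Or.inr (by rwa [coverRadius_self] at hi)
  · exact Or.inl (mem_biUnion hne (by rwa [coverRadius_of_ne hne] at hi))
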